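/- Let Φ be a homogeneous Poisson point process on ℝ² with intensity λ, independently marked with lognormal shadowing marks S_x = exp(m + σ Z_x) where Z_x are i.i.d. standard normal, and restricted to points with ‖x‖ ≤ D. Then the propagation process N = {‖x‖^α / S_x : x ∈ Φ, ‖x‖ ≤ D} is a Poisson point process on (0, ∞) with intensity measure Λ([0,t)) = λ π [ D² Q((ln(D^α/t) - m)/σ) + t^{2/α} exp(2σ²/α² + 2m/α) Q(2σ²/(ασ) - (ln(D^α/t) - m)/σ) ], where Q is the standard Gaussian complementary CDF. -/

import Mathlib

open MeasureTheory ProbabilityTheory Real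

/-- A point process `N` (a random counting measure) is Poisson with intensity measure `Λ`:
counts of measurable sets are Poisson distributed with mean `Λ s`, and counts of pairwise
disjoint sets are independent. -/
def IsPoissonPP {Ω E : Type*} [MeasurableSpace Ω] [MeasurableSpace E]
    (P : Measure Ω) (N : Ω → Measure E) (Λ : Measure E) : Prop :=
  (∀ s : Set E, MeasurableSet s → Λ s ≠ ⊤ → ∀ k : ℕ,
      P {ω | N ω s = k} =
        ENNReal.ofReal (Real.exp (-(Λ s).toReal) * (Λ s).toReal ^ k / k.factorial)) ∧
  (∀ (n : ℕ) (s : Fin n → Set E), (∀ i, MeasurableSet (s i)) →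
      Pairwise (Function.onFun Disjoint s) →
      iIndepFun (fun i ω => N ω (s i)) P)

/-- The standard Gaussian complementary CDF. -/
noncomputable def gaussQ (x : ℝ) : ℝ := (gaussianReal 0 1 (Set.Ioi x)).toReal

lemma isPoissonPP_map {Ω E F : Type*} [MeasurableSpace Ω] [MeasurableSpace E]
    [MeasurableSpace F] {P : Measure Ω} {N : Ω → Measure E} {Λ : Measure E}
    {f : E → F} (hf : Measurable f) (h : IsPoissonPP P N Λ) :
    IsPoissonPP P (fun ω => (N ω).map f) (Λ.map f) := by
  constructor
  · intro s hs hΛ k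
    have hmap : ∀ ω, (N ω).map f s = N ω (f ⁻¹' s) := fun ω => Measure.map_apply hf hs
    have hΛ' : Λ.map f s = Λ (f ⁻¹' s) := Measure.map_apply hf hs
    simp only [hmap, hΛ']
    rw [hΛ'] at hΛ
    exact h.1 _ (hf hs) hΛ k
  · intro n s hs hd
    have key : (fun (i : Fin n) (ω : Ω) => (N ω).map f (s i))
        = fun i ω => N ω (f ⁻¹' s i) := by
      funext i ω; exact Measure.map_apply hf (hs i)
    rw [key]
    exact h.2 n _ (fun i => hf (hs i)) (fun i j hij => (hd hij).preimage f)

lemma nn_mk_eq (σ : ℝ) : (⟨σ ^ 2, sq_nonneg σ⟩ : NNReal) = NNReal.mk (σ ^ 2) (sq_nonneg σ) := rfl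

lemma tilt_pdf {σ : ℝ} (hσ : 0 < σ) (m s x : ℝ) :
    rexp (s * x) * gaussianPDFReal m ⟨σ ^ 2, sq_nonneg σ⟩ x
      = rexp (s * m + s ^ 2 * σ ^ 2 / 2) *
        gaussianPDFReal (m + s * σ ^ 2) ⟨σ ^ 2, sq_nonneg σ⟩ x := by
  rw [nn_mk_eq]
  simp only [gaussianPDFReal, NNReal.coe_mk]
  have hexp : rexp (s * x) * rexp (-(x - m) ^ 2 / (2 * σ ^ 2))
      = rexp (s * m + s ^ 2 * σ ^ 2 / 2) * rexp (-(x - (m + s * σ ^ 2)) ^ 2 / (2 * σ ^ 2)) := by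
    rw [← Real.exp_add, ← Real.exp_add]
    congr 1
    field_simp
    ring
  linear_combination (√(2 * π * σ ^ 2))⁻¹ * hexp

lemma gauss_var_ne {σ : ℝ} (hσ : 0 < σ) : (⟨σ ^ 2, sq_nonneg σ⟩ : NNReal) ≠ 0 := by
  intro h
  have : (σ : ℝ) ^ 2 = 0 := congrArg NNReal.toReal h
  nlinarith

lemma gauss_atom (m : ℝ) {v : NNReal} (hv : v ≠ 0) (x : ℝ) : gaussianReal m v {x} = 0 := by
  rw [gaussianReal_apply m hv, lintegral_singleton, Real.volume_singleton, mul_zero]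

lemma gaussianReal_eq_map {σ : ℝ} (hσ : 0 < σ) (m : ℝ) :
    gaussianReal m ⟨σ ^ 2, sq_nonneg σ⟩ = (gaussianReal 0 1).map (fun x => σ * x + m) := by
  have h1 : (gaussianReal 0 1).map (σ * ·) = gaussianReal 0 ⟨σ ^ 2, sq_nonneg σ⟩ := by
    rw [nn_mk_eq, gaussianReal_map_const_mul]
    congr 1 <;> simp
  have h2 : (fun x : ℝ => σ * x + m) = (· + m) ∘ (σ * ·) := rfl
  rw [h2, ← Measure.map_map (measurable_add_const m) (measurable_const_mul σ), h1,
    gaussianReal_map_add_const (μ := 0) (v := ⟨σ ^ 2, sq_nonneg σ⟩) m, zero_add]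

lemma gauss_Ioi {σ : ℝ} (hσ : 0 < σ) (m a : ℝ) :
    gaussianReal m ⟨σ ^ 2, sq_nonneg σ⟩ (Set.Ioi a)
      = gaussianReal 0 1 (Set.Ioi ((a - m) / σ)) := by
  rw [gaussianReal_eq_map hσ, Measure.map_apply (by fun_prop) measurableSet_Ioi]
  congr 1
  ext x
  simp only [Set.mem_preimage, Set.mem_Ioi]
  rw [div_lt_iff₀ hσ]
  constructor <;> intro h <;> nlinarith

lemma gauss01_symm : (gaussianReal 0 1).map (fun x : ℝ => -x) = gaussianReal 0 1 := by
  have h := gaussianReal_map_const_mul (μ := 0) (v := 1) (-1)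
  simp only [neg_one_mul] at h
  rw [h]
  congr 1
  · ring
  · refine NNReal.eq ?_
    norm_num

lemma gauss01_Iic (y : ℝ) :
    gaussianReal 0 1 (Set.Iic y) = gaussianReal 0 1 (Set.Ioi (-y)) := by
  conv_lhs => rw [← gauss01_symm]
  rw [Measure.map_apply measurable_neg measurableSet_Iic]
  have h1 : (fun x : ℝ => -x) ⁻¹' Set.Iic y = Set.Ici (-y) := by
    ext x; simp [neg_le]
  rw [h1]
  have h2 : Set.Ici (-y) = Set.Ioi (-y) ∪ {(-y)} := by
    ext x
    simp only [Set.mem_Ici, Set.mem_union, Set.mem_Ioi, Set.mem_singleton_iff]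
    constructor
    · intro h; rcases eq_or_lt_of_le h with h' | h'
      · exact Or.inr h'.symm
      · exact Or.inl h'
    · rintro (h | h) <;> simp [le_of_lt, h, le_refl]
  rw [h2, measure_union (by simp) (measurableSet_singleton _), gauss_atom 0 one_ne_zero,
    add_zero]

lemma gauss_Iic {σ : ℝ} (hσ : 0 < σ) (m a : ℝ) :
    gaussianReal m ⟨σ ^ 2, sq_nonneg σ⟩ (Set.Iic a)
      = gaussianReal 0 1 (Set.Ioi ((m - a) / σ)) := by
  rw [gaussianReal_eq_map hσ, Measure.map_apply (by fun_prop) measurableSet_Iic]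
  have h1 : (fun x : ℝ => σ * x + m) ⁻¹' Set.Iic a = Set.Iic ((a - m) / σ) := by
    ext x
    simp only [Set.mem_preimage, Set.mem_Iic]
    rw [le_div_iff₀ hσ]
    constructor <;> intro h <;> nlinarith
  rw [h1, gauss01_Iic]
  congr 2
  rw [← neg_div, neg_sub]

lemma tilt_int {σ : ℝ} (hσ : 0 < σ) (m s g0 : ℝ) :
    ∫⁻ g in Set.Iic g0, ENNReal.ofReal (rexp (s * g)) ∂(gaussianReal m ⟨σ ^ 2, sq_nonneg σ⟩)
      = ENNReal.ofReal (rexp (s * m + s ^ 2 * σ ^ 2 / 2)) *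
        gaussianReal (m + s * σ ^ 2) ⟨σ ^ 2, sq_nonneg σ⟩ (Set.Iic g0) := by
  have hv := gauss_var_ne hσ
  rw [gaussianReal_of_var_ne_zero _ hv,
    setLIntegral_withDensity_eq_setLIntegral_mul _ (measurable_gaussianPDF m ⟨σ ^ 2, sq_nonneg σ⟩)
      (by fun_prop) measurableSet_Iic]
  have hpt : ∀ g : ℝ, (gaussianPDF m ⟨σ ^ 2, sq_nonneg σ⟩ * fun g => ENNReal.ofReal (rexp (s * g))) g
      = ENNReal.ofReal (rexp (s * m + s ^ 2 * σ ^ 2 / 2)) *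
        gaussianPDF (m + s * σ ^ 2) ⟨σ ^ 2, sq_nonneg σ⟩ g := by
    intro g
    simp only [Pi.mul_apply, gaussianPDF]
    rw [← ENNReal.ofReal_mul (gaussianPDFReal_nonneg m ⟨σ ^ 2, sq_nonneg σ⟩ g), ← ENNReal.ofReal_mul (exp_nonneg _)]
    congr 1
    rw [mul_comm]
    exact tilt_pdf hσ m s g
  rw [show (gaussianPDF m ⟨σ ^ 2, sq_nonneg σ⟩ * fun g => ENNReal.ofReal (rexp (s * g)))
      = fun g => ENNReal.ofReal (rexp (s * m + s ^ 2 * σ ^ 2 / 2)) *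
        gaussianPDF (m + s * σ ^ 2) ⟨σ ^ 2, sq_nonneg σ⟩ g from funext hpt,
    lintegral_const_mul _ (measurable_gaussianPDF (m + s * σ ^ 2) ⟨σ ^ 2, sq_nonneg σ⟩),
    ← gaussianReal_apply (m + s * σ ^ 2) hv]

lemma vol_slice {α D t : ℝ} (hα : 0 < α) (hD : 0 < D) (ht : 0 < t) (g : ℝ) :
    volume ({x : EuclideanSpace ℝ (Fin 2) | α * Real.log ‖x‖ - Real.log t < g}
        ∩ Metric.closedBall 0 D)
      = ENNReal.ofReal (π * min (rexp ((g + Real.log t) / α)) D ^ 2) := by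
  set R := rexp ((g + Real.log t) / α) with hR_def
  have hR : 0 < R := exp_pos _
  have h0 : volume ({0} : Set (EuclideanSpace ℝ (Fin 2))) = 0 := by
    rw [← Metric.closedBall_zero, EuclideanSpace.volume_closedBall]
    simp
  have hmem : ∀ x : EuclideanSpace ℝ (Fin 2), x ≠ 0 →
      (x ∈ {x : EuclideanSpace ℝ (Fin 2) | α * Real.log ‖x‖ - Real.log t < g}
        ↔ x ∈ Metric.ball (0 : EuclideanSpace ℝ (Fin 2)) R) := by
    intro x hx
    have hnx : 0 < ‖x‖ := norm_pos_iff.mpr hx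
    simp only [Set.mem_setOf_eq, mem_ball_zero_iff]
    rw [hR_def, ← Real.log_lt_iff_lt_exp hnx, lt_div_iff₀ hα]
    constructor <;> intro h <;> nlinarith
  have hae : ({x : EuclideanSpace ℝ (Fin 2) | α * Real.log ‖x‖ - Real.log t < g} : Set _)
      =ᵐ[volume] Metric.ball (0 : EuclideanSpace ℝ (Fin 2)) R := by
    have hne : ∀ᵐ x ∂(volume : Measure (EuclideanSpace ℝ (Fin 2))), x ≠ 0 := by
      rw [ae_iff]
      refine measure_mono_null (fun x hx => ?_) h0
      simpa using not_not.mp hx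
    rw [Filter.eventuallyEq_set]
    exact hne.mono fun x hx => hmem x hx
  have hae2 := hae.inter (Filter.EventuallyEq.rfl
    (f := (Metric.closedBall (0 : EuclideanSpace ℝ (Fin 2)) D : Set _)) (l := ae volume))
  rw [measure_congr hae2]
  have hvol2 : ∀ r : ℝ, 0 ≤ r → (ENNReal.ofReal r) ^ Fintype.card (Fin 2) *
      ENNReal.ofReal (Real.sqrt π ^ Fintype.card (Fin 2) / Real.Gamma (Fintype.card (Fin 2) / 2 + 1))
      = ENNReal.ofReal (π * r ^ 2) := by
    intro r hr
    rw [Fintype.card_fin]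
    norm_num [Real.Gamma_two, Real.sq_sqrt Real.pi_nonneg]
    rw [← ENNReal.ofReal_pow hr, ← ENNReal.ofReal_mul (by positivity), mul_comm]
  rcases le_or_gt R D with hRD | hRD
  · rw [Set.inter_eq_left.mpr (Metric.ball_subset_closedBall.trans
      (Metric.closedBall_subset_closedBall hRD)), EuclideanSpace.volume_ball, hvol2 R hR.le,
      min_eq_left hRD]
  · rw [Set.inter_eq_right.mpr (fun x hx => Metric.mem_ball.mpr
      (lt_of_le_of_lt (Metric.mem_closedBall.mp hx) hRD)),
      EuclideanSpace.volume_closedBall, hvol2 D hD.le, min_eq_right hRD.le]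

/-- Displacement theorem for lognormally-shadowed LOS base stations: if `N` is a marked PPP on
`ℝ² × ℝ` with intensity `λ·Leb|_{ball(0,D)} ⊗ Lognormal(m,σ²)`, then the propagation process
`{‖x‖^α / S : (x,S) ∈ N}` is a PPP whose intensity measure of `[0,t)` is
`λπ[D² Q((ln(D^α/t)-m)/σ) + t^{2/α} e^{2σ²/α² + 2m/α} Q(2σ²/(ασ) - (ln(D^α/t)-m)/σ)]`. -/
theorem stmt_4 {Ω : Type*} [MeasurableSpace Ω] (P : Measure Ω) [IsProbabilityMeasure P]
    (lam α m σ D : ℝ) (hlam : 0 < lam) (hα : 0 < α) (hσ : 0 < σ) (hD : 0 < D)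
    (N : Ω → Measure (EuclideanSpace ℝ (Fin 2) × ℝ))
    (hN : IsPoissonPP P N
      ((ENNReal.ofReal lam •
          volume.restrict (Metric.closedBall (0 : EuclideanSpace ℝ (Fin 2)) D)).prod
        ((gaussianReal m ⟨σ ^ 2, sq_nonneg σ⟩).map Real.exp))) :
    IsPoissonPP P (fun ω => (N ω).map fun p => ‖p.1‖ ^ α / p.2)
      (((ENNReal.ofReal lam •
            volume.restrict (Metric.closedBall (0 : EuclideanSpace ℝ (Fin 2)) D)).prod
          ((gaussianReal m ⟨σ ^ 2, sq_nonneg σ⟩).map Real.exp)).map fun p => ‖p.1‖ ^ α / p.2)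
    ∧ ∀ t : ℝ, 0 < t →
      ((((ENNReal.ofReal lam •
            volume.restrict (Metric.closedBall (0 : EuclideanSpace ℝ (Fin 2)) D)).prod
          ((gaussianReal m ⟨σ ^ 2, sq_nonneg σ⟩).map Real.exp)).map
            fun p => ‖p.1‖ ^ α / p.2) (Set.Ico 0 t))
        = ENNReal.ofReal (lam * π *
            (D ^ 2 * gaussQ ((Real.log (D ^ α / t) - m) / σ) +
              t ^ (2 / α) * Real.exp (2 * σ ^ 2 / α ^ 2 + 2 * m / α) *
                gaussQ (2 * σ ^ 2 / (α * σ) - (Real.log (D ^ α / t) - m) / σ))) := by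
  have hf : Measurable fun p : EuclideanSpace ℝ (Fin 2) × ℝ => ‖p.1‖ ^ α / p.2 := by
    fun_prop
  refine ⟨isPoissonPP_map hf hN, ?_⟩
  intro t ht
  have hv := gauss_var_ne hσ
  haveI : IsProbabilityMeasure (gaussianReal m ⟨σ ^ 2, sq_nonneg σ⟩) := by
    rw [nn_mk_eq]; infer_instance
  haveI hPμ : IsProbabilityMeasure ((gaussianReal m ⟨σ ^ 2, sq_nonneg σ⟩).map Real.exp) :=
    Measure.isProbabilityMeasure_map measurable_exp.aemeasurable
  set B := Metric.closedBall (0 : EuclideanSpace ℝ (Fin 2)) D with hB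
  set A := (fun p : EuclideanSpace ℝ (Fin 2) × ℝ => ‖p.1‖ ^ α / p.2) ⁻¹' Set.Ico 0 t with hA
  have hAm : MeasurableSet A := hf measurableSet_Ico
  rw [Measure.map_apply hf measurableSet_Ico, Measure.prod_apply hAm, lintegral_smul_measure]
  -- Step 1 : rewrite inner measure
  have h0 : volume ({0} : Set (EuclideanSpace ℝ (Fin 2))) = 0 := by
    rw [← Metric.closedBall_zero, EuclideanSpace.volume_closedBall]
    simp
  have hne : ∀ᵐ x ∂(volume.restrict B), x ≠ (0 : EuclideanSpace ℝ (Fin 2)) := by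
    refine ae_restrict_of_ae ?_
    rw [ae_iff]
    refine measure_mono_null (fun x hx => ?_) h0
    simpa using not_not.mp hx
  have hstep1 : ∫⁻ x, ((gaussianReal m ⟨σ ^ 2, sq_nonneg σ⟩).map Real.exp) (Prod.mk x ⁻¹' A)
        ∂(volume.restrict B)
      = ∫⁻ x, gaussianReal m ⟨σ ^ 2, sq_nonneg σ⟩
          (Set.Ioi (α * Real.log ‖x‖ - Real.log t)) ∂(volume.restrict B) := by
    refine lintegral_congr_ae (hne.mono fun x hx => ?_)
    dsimp only
    have hnx : 0 < ‖x‖ := norm_pos_iff.mpr hx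
    have hr : 0 < ‖x‖ ^ α := Real.rpow_pos_of_pos hnx α
    have hAx : MeasurableSet (Prod.mk x ⁻¹' A) := measurable_prodMk_left hAm
    rw [Measure.map_apply measurable_exp hAx]
    congr 1
    ext g
    simp only [hA, Set.mem_preimage, Set.mem_Ico, Set.mem_Ioi]
    constructor
    · rintro ⟨-, h2⟩
      rw [div_lt_iff₀ (exp_pos g)] at h2
      have hlog := (Real.log_lt_log_iff hr (by positivity)).mpr h2
      rw [Real.log_rpow hnx, Real.log_mul (ne_of_gt ht) (exp_ne_zero g), Real.log_exp] at hlog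
      linarith
    · intro h
      refine ⟨div_nonneg hr.le (exp_pos g).le, ?_⟩
      rw [div_lt_iff₀ (exp_pos g)]
      have h' : Real.log (‖x‖ ^ α) < Real.log (t * rexp g) := by
        rw [Real.log_rpow hnx, Real.log_mul (ne_of_gt ht) (exp_ne_zero g), Real.log_exp]
        linarith
      exact (Real.log_lt_log_iff hr (by positivity)).mp h'
  rw [hstep1]
  -- Step 2 : Tonelli swap
  set S : Set (EuclideanSpace ℝ (Fin 2) × ℝ) :=
    {p | α * Real.log ‖p.1‖ - Real.log t < p.2} with hS_def
  have hS : MeasurableSet S :=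
    measurableSet_lt ((measurable_fst.norm.log.const_mul α).sub_const (Real.log t))
      measurable_snd
  have hT : ∀ g : ℝ, MeasurableSet {x : EuclideanSpace ℝ (Fin 2) |
      α * Real.log ‖x‖ - Real.log t < g} := fun g =>
    measurableSet_lt ((measurable_norm.log.const_mul α).sub_const (Real.log t))
      measurable_const
  have hstep2 : ∫⁻ x, gaussianReal m ⟨σ ^ 2, sq_nonneg σ⟩
        (Set.Ioi (α * Real.log ‖x‖ - Real.log t)) ∂(volume.restrict B)
      = ∫⁻ g, volume ({x : EuclideanSpace ℝ (Fin 2) | α * Real.log ‖x‖ - Real.log t < g} ∩ B)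
          ∂(gaussianReal m ⟨σ ^ 2, sq_nonneg σ⟩) := by
    have e1 : ∀ x : EuclideanSpace ℝ (Fin 2),
        gaussianReal m ⟨σ ^ 2, sq_nonneg σ⟩ (Set.Ioi (α * Real.log ‖x‖ - Real.log t))
        = ∫⁻ g, S.indicator (1 : EuclideanSpace ℝ (Fin 2) × ℝ → ENNReal) (x, g) ∂(gaussianReal m ⟨σ ^ 2, sq_nonneg σ⟩) := by
      intro x
      rw [← lintegral_indicator_one measurableSet_Ioi]
      refine lintegral_congr fun g => ?_
      simp [Set.indicator_apply, hS_def, Set.mem_Ioi]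
    simp_rw [e1]
    haveI : SFinite (gaussianReal m ⟨σ ^ 2, sq_nonneg σ⟩) := by rw [nn_mk_eq]; infer_instance
    rw [lintegral_lintegral_swap (μ := volume.restrict B)
      (ν := gaussianReal m ⟨σ ^ 2, sq_nonneg σ⟩)
      (f := fun x g => S.indicator (1 : EuclideanSpace ℝ (Fin 2) × ℝ → ENNReal) (x, g)) ((measurable_one.indicator hS).aemeasurable)]
    refine lintegral_congr fun g => ?_
    have e2 : (fun x : EuclideanSpace ℝ (Fin 2) => S.indicator (1 : EuclideanSpace ℝ (Fin 2) × ℝ → ENNReal) (x, g))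
        = ({x : EuclideanSpace ℝ (Fin 2) | α * Real.log ‖x‖ - Real.log t < g}).indicator (1 : EuclideanSpace ℝ (Fin 2) → ENNReal) := by
      funext x
      simp [Set.indicator_apply, hS_def]
    rw [e2, lintegral_indicator_one (hT g), Measure.restrict_apply (hT g)]
  rw [hstep2]
  have hstep3 : ∫⁻ g, volume ({x : EuclideanSpace ℝ (Fin 2) |
        α * Real.log ‖x‖ - Real.log t < g} ∩ B) ∂(gaussianReal m ⟨σ ^ 2, sq_nonneg σ⟩)
      = ∫⁻ g, ENNReal.ofReal (π * min (rexp ((g + Real.log t) / α)) D ^ 2)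
          ∂(gaussianReal m ⟨σ ^ 2, sq_nonneg σ⟩) :=
    lintegral_congr fun g => vol_slice hα hD ht g
  rw [hstep3]
  set c := Real.log t with hc
  set g0 := α * Real.log D - c with hg0
  rw [← lintegral_add_compl (fun g => ENNReal.ofReal (π * min (rexp ((g + c) / α)) D ^ 2))
    (measurableSet_Iic (a := g0)), Set.compl_Iic]
  -- Piece 1
  have hpiece1 : ∫⁻ g in Set.Iic g0, ENNReal.ofReal (π * min (rexp ((g + c) / α)) D ^ 2)
        ∂(gaussianReal m ⟨σ ^ 2, sq_nonneg σ⟩)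
      = ENNReal.ofReal (π * rexp (2 * c / α)) *
        (ENNReal.ofReal (rexp ((2 / α) * m + (2 / α) ^ 2 * σ ^ 2 / 2)) *
          gaussianReal 0 1 (Set.Ioi ((m + (2 / α) * σ ^ 2 - g0) / σ))) := by
    have hcong : ∀ g ∈ Set.Iic g0, ENNReal.ofReal (π * min (rexp ((g + c) / α)) D ^ 2)
        = ENNReal.ofReal (π * rexp (2 * c / α)) * ENNReal.ofReal (rexp ((2 / α) * g)) := by
      intro g hg
      have hg' : g ≤ g0 := hg
      have hle : rexp ((g + c) / α) ≤ D := by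
        rw [← Real.exp_log hD]
        refine Real.exp_le_exp.mpr ?_
        rw [div_le_iff₀ hα]
        rw [hg0] at hg'
        nlinarith
      rw [min_eq_left hle, ← ENNReal.ofReal_mul (by positivity)]
      congr 1
      have hsq : rexp ((g + c) / α) ^ 2 = rexp (2 * c / α) * rexp ((2 / α) * g) := by
        rw [sq, ← Real.exp_add, ← Real.exp_add]
        congr 1
        field_simp
        ring
      rw [hsq]
      ring
    rw [setLIntegral_congr_fun measurableSet_Iic hcong,
      lintegral_const_mul _ (by fun_prop), tilt_int hσ m (2 / α) g0, gauss_Iic hσ]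
  -- Piece 2
  have hpiece2 : ∫⁻ g in Set.Ioi g0, ENNReal.ofReal (π * min (rexp ((g + c) / α)) D ^ 2)
        ∂(gaussianReal m ⟨σ ^ 2, sq_nonneg σ⟩)
      = ENNReal.ofReal (π * D ^ 2) * gaussianReal 0 1 (Set.Ioi ((g0 - m) / σ)) := by
    have hcong : ∀ g ∈ Set.Ioi g0, ENNReal.ofReal (π * min (rexp ((g + c) / α)) D ^ 2)
        = ENNReal.ofReal (π * D ^ 2) := by
      intro g hg
      have hg' : g0 < g := hg
      have hle : D ≤ rexp ((g + c) / α) := by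
        rw [← Real.exp_log hD]
        refine Real.exp_le_exp.mpr ?_
        rw [le_div_iff₀ hα]
        rw [hg0] at hg'
        nlinarith
      rw [min_eq_right hle]
    rw [setLIntegral_congr_fun measurableSet_Ioi hcong, setLIntegral_const,
      gauss_Ioi hσ]
  rw [hpiece1, hpiece2]
  -- Final assembly
  have hθ : Real.log (D ^ α / t) = g0 := by
    rw [Real.log_div (ne_of_gt (Real.rpow_pos_of_pos hD α)) (ne_of_gt ht), Real.log_rpow hD,
      hg0, hc]
  rw [hθ]
  rw [show 2 * σ ^ 2 / (α * σ) - (g0 - m) / σ = (m + 2 / α * σ ^ 2 - g0) / σ by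
    field_simp
    ring]
  have hQ : ∀ y : ℝ, gaussianReal 0 1 (Set.Ioi y) = ENNReal.ofReal (gaussQ y) := fun y =>
    (ENNReal.ofReal_toReal (measure_ne_top _ _)).symm
  rw [hQ, hQ]
  have hq1 : 0 ≤ gaussQ ((g0 - m) / σ) := ENNReal.toReal_nonneg
  have hq2 : 0 ≤ gaussQ ((m + 2 / α * σ ^ 2 - g0) / σ) := ENNReal.toReal_nonneg
  rw [smul_eq_mul, ← ENNReal.ofReal_mul (exp_nonneg _), ← ENNReal.ofReal_mul (by positivity),
    ← ENNReal.ofReal_mul (by positivity),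
    ← ENNReal.ofReal_add
      (mul_nonneg (by positivity) (mul_nonneg (exp_nonneg _) hq2))
      (mul_nonneg (by positivity) hq1),
    ← ENNReal.ofReal_mul hlam.le]
  congr 1
  have hrt : t ^ (2 / α) = rexp (2 * c / α) := by
    rw [Real.rpow_def_of_pos ht, ← hc]
    congr 1
    ring
  have hre : rexp ((2 / α) * m + (2 / α) ^ 2 * σ ^ 2 / 2)
      = rexp (2 * σ ^ 2 / α ^ 2 + 2 * m / α) := by
    congr 1
    field_simp
    ring
  rw [hrt, hre]
  ring
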